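/- Let n ≥ 1, let (P_k)_{k≥0} be a harmonic sequence of polynomials satisfying the symmetry condition P_k(t) = (−1)^k·P_k(a+b−t) for all t ∈ [a,b] and all k, and let f be n-times differentiable on an open interval containing [a,b] with f^(n) absolutely continuous on [a,b]. Then for every x ∈ [a,(a+b)/2], (1/n)·( (f(x)+f(a+b−x))/2 + Σ_{k=1}^{n−1} ( ((−1)^k/2)·P_k(x)·( f^{(k)}(x) + (−1)^k·f^{(k)}(a+b−x) ) + F̃_k(a,b) ) ) − (1/(b−a))·∫_a^b f(y) dy = ((−1)^{n−1}/((b−a)·n))·∫_a^b P_{n−1}(t)·S(t,x)·f^(n)(t) dt. -/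

import Mathlib

open MeasureTheory Set

/-- The Guessab–Schmeisser / Fink-type kernel `S(t,x)` on `[a,b]`. -/
noncomputable def Skernel (a b x t : ℝ) : ℝ :=
  if t ≤ x then t - a else if t < a + b - x then t - (a + b) / 2 else t - b

/-- `g` is absolutely continuous on `[a,b]`. -/
def AbsCont (g : ℝ → ℝ) (a b : ℝ) : Prop :=
  ∃ h : ℝ → ℝ, IntervalIntegrable h MeasureTheory.volume a b ∧
    ∀ t ∈ Set.Icc a b, g t = g a + ∫ s in a..t, h s

/-- A harmonic sequence of polynomials: `P 0 = 1` and `(P (k+1))' = P k`. -/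
def HarmonicSeq (P : ℕ → Polynomial ℝ) : Prop :=
  P 0 = 1 ∧ ∀ k, (P (k + 1)).derivative = P k

/-- The term `T_k(x)` of the harmonic-sequence expansion. -/
noncomputable def Tterm (P : ℕ → Polynomial ℝ) (f : ℝ → ℝ) (a b x : ℝ) (k : ℕ) : ℝ :=
  ((-1 : ℝ) ^ k / 2) *
    ((P k).eval x * iteratedDeriv k f x +
      (P k).eval (a + b - x) * iteratedDeriv k f (a + b - x))

/-- The term `F̃_k(a,b)` of the harmonic-sequence expansion. -/
noncomputable def Ftilde (P : ℕ → Polynomial ℝ) (f : ℝ → ℝ) (n : ℕ) (a b : ℝ) (k : ℕ) : ℝ :=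
  ((-1 : ℝ) ^ k * ((n : ℝ) - k) / (b - a)) *
    ((P k).eval a * iteratedDeriv (k - 1) f a - (P k).eval b * iteratedDeriv (k - 1) f b)

/-!
On each of the three intervals where `S(·, x)` is affine, `t ↦ P_m(t) (t - c)` is the top of the
chain `Q_k = P_k (X - c) + (m - k) P_{k+1}`, which satisfies `Q_{k+1}' = Q_k` and `Q_0' = m + 1`.
Hence the alternating sum `Σ_{k ≤ m} (-1)^k Q_k f^{(k)}` telescopes under differentiation to
`(m + 1) f + (-1)^m P_m(t) (t - c) f^{(m+1)}`. Splitting it as `(t - c) U + R`, the `U`-terms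
survive only at `x` and `a + b - x`, each with weight `(b - a)/2`, and the `R`-terms only at the
endpoints, where they are the `F̃_k`; the symmetry of `P_k` puts `U(a + b - x)` in the stated form.
-/

open Polynomial Finset

theorem ContDiffOn.continuousOn_iteratedDeriv_of_isOpen {f : ℝ → ℝ} {s : Set ℝ}
    {n : WithTop ℕ∞} {m : ℕ} (hf : ContDiffOn ℝ n f s) (hs : IsOpen s) (hm : m ≤ n) :
    ContinuousOn (iteratedDeriv m f) s :=
  (hf.continuousOn_iteratedDerivWithin hm hs.uniqueDiffOn).congr fun _ ht =>
    (iteratedDerivWithin_of_isOpen hs ht).symm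

theorem ContDiffOn.hasDerivAt_iteratedDeriv_of_isOpen {f : ℝ → ℝ} {s : Set ℝ}
    {n : WithTop ℕ∞} {m : ℕ} (hf : ContDiffOn ℝ n f s) (hs : IsOpen s) (hm : m < n)
    {t : ℝ} (ht : t ∈ s) :
    HasDerivAt (iteratedDeriv m f) (iteratedDeriv (m + 1) f t) t := by
  have hdiff : DifferentiableOn ℝ (iteratedDeriv m f) s :=
    (hf.differentiableOn_iteratedDerivWithin hm hs.uniqueDiffOn).congr fun _ hy =>
      (iteratedDerivWithin_of_isOpen hs hy).symm
  rw [iteratedDeriv_succ]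
  exact ((hdiff t ht).differentiableAt (hs.mem_nhds ht)).hasDerivAt

theorem Finset.sum_Icc_one_eq_sum_range {M : Type*} [AddCommMonoid M] (g : ℕ → M) (m : ℕ) :
    ∑ k ∈ Icc 1 m, g k = ∑ k ∈ range m, g (k + 1) := by
  rw [range_eq_Ico, sum_Ico_add', ← Ico_add_one_right_eq_Icc, zero_add]

noncomputable def darbouxSum (Q : ℕ → ℝ[X]) (f : ℝ → ℝ) (m : ℕ) (t : ℝ) : ℝ :=
  ∑ k ∈ range (m + 1), (-1) ^ k * (Q k).eval t * iteratedDeriv k f t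

theorem darbouxSum_zero (Q : ℕ → ℝ[X]) (f : ℝ → ℝ) :
    darbouxSum Q f 0 = fun s => (Q 0).eval s * f s := by
  ext s; simp [darbouxSum]

theorem darbouxSum_succ (Q : ℕ → ℝ[X]) (f : ℝ → ℝ) (m : ℕ) :
    darbouxSum Q f (m + 1) = fun s =>
      darbouxSum Q f m s + (-1) ^ (m + 1) * ((Q (m + 1)).eval s * iteratedDeriv (m + 1) f s) := by
  ext s; rw [darbouxSum, sum_range_succ, mul_assoc]; rfl

theorem hasDerivAt_darbouxSum {Q : ℕ → ℝ[X]} (hQ : ∀ k, (Q (k + 1)).derivative = Q k)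
    {f : ℝ → ℝ} {t : ℝ} (m : ℕ)
    (hf : ∀ k ≤ m, HasDerivAt (iteratedDeriv k f) (iteratedDeriv (k + 1) f t) t) :
    HasDerivAt (darbouxSum Q f m)
      ((Q 0).derivative.eval t * f t + (-1) ^ m * (Q m).eval t * iteratedDeriv (m + 1) f t) t := by
  induction m with
  | zero =>
    rw [darbouxSum_zero]
    have hf0 := hf 0 le_rfl
    rw [iteratedDeriv_zero] at hf0
    exact (((Q 0).hasDerivAt t).mul hf0).congr_deriv (by ring)
  | succ m ih =>
    rw [darbouxSum_succ]
    have hlast :=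
      (((Q (m + 1)).hasDerivAt t).mul (hf (m + 1) le_rfl)).const_mul ((-1 : ℝ) ^ (m + 1))
    rw [hQ] at hlast
    exact ((ih fun k hk => hf k (hk.trans m.le_succ)).add hlast).congr_deriv (by ring)

noncomputable def weightedShift (P : ℕ → ℝ[X]) (m k : ℕ) : ℝ[X] :=
  C ((m : ℝ) - k) * P (k + 1)

noncomputable def kernelChain (P : ℕ → ℝ[X]) (c : ℝ) (m k : ℕ) : ℝ[X] :=
  P k * (X - C c) + weightedShift P m k

theorem kernelChain_self (P : ℕ → ℝ[X]) (c : ℝ) (m : ℕ) :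
    kernelChain P c m m = P m * (X - C c) := by
  simp [kernelChain, weightedShift]

theorem darbouxSum_kernelChain (P : ℕ → ℝ[X]) (f : ℝ → ℝ) (c : ℝ) (m : ℕ) (t : ℝ) :
    darbouxSum (kernelChain P c m) f m t =
      (t - c) * darbouxSum P f m t + darbouxSum (weightedShift P m) f m t := by
  simp only [darbouxSum, kernelChain, weightedShift, eval_add, eval_mul, eval_sub, eval_X, eval_C,
    mul_sum, ← sum_add_distrib]
  exact sum_congr rfl fun _ _ => by ring

theorem integral_mul_Skernel_mul {a b x : ℝ} (hx : x ∈ Icc a ((a + b) / 2)) {φ ψ : ℝ → ℝ}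
    (hφ : ContinuousOn φ (Icc a b)) (hψ : ContinuousOn ψ (Icc a b)) :
    ∫ t in a..b, φ t * Skernel a b x t * ψ t =
      (∫ t in a..x, φ t * (t - a) * ψ t) + (∫ t in x..a + b - x, φ t * (t - (a + b) / 2) * ψ t)
        + ∫ t in a + b - x..b, φ t * (t - b) * ψ t := by
  obtain ⟨hax, hxm⟩ := hx
  have hpiece : ∀ {u v : ℝ} (c : ℝ), a ≤ u → u ≤ v → v ≤ b →
      IntervalIntegrable (fun t => φ t * (t - c) * ψ t) volume u v := by
    intro u v c hau huv hvb
    have hsub : uIcc u v ⊆ Icc a b := by rw [uIcc_of_le huv]; exact Icc_subset_Icc hau hvb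
    exact ContinuousOn.intervalIntegrable
      (((hφ.mono hsub).mul (continuousOn_id.sub continuousOn_const)).mul (hψ.mono hsub))
  have h₁ : EqOn (fun t => φ t * (t - a) * ψ t) (fun t => φ t * Skernel a b x t * ψ t)
      (uIoo a x) := by
    intro t ht
    rw [uIoo_of_le hax] at ht
    simp [Skernel, ht.2.le]
  have h₂ : EqOn (fun t => φ t * (t - (a + b) / 2) * ψ t)
      (fun t => φ t * Skernel a b x t * ψ t) (uIoo x (a + b - x)) := by
    intro t ht
    rw [uIoo_of_le (by linarith)] at ht
    simp [Skernel, not_le.2 ht.1, ht.2]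
  have h₃ : EqOn (fun t => φ t * (t - b) * ψ t) (fun t => φ t * Skernel a b x t * ψ t)
      (uIoo (a + b - x) b) := by
    intro t ht
    rw [uIoo_of_le (by linarith)] at ht
    simp [Skernel, not_le.2 (by linarith [ht.1] : x < t), not_lt.2 ht.1.le]
  have i₁ := (hpiece a le_rfl hax (by linarith)).congr_uIoo h₁
  have i₂ := (hpiece ((a + b) / 2) hax (by linarith) (by linarith)).congr_uIoo h₂
  have i₃ := (hpiece b (by linarith) (by linarith) le_rfl).congr_uIoo h₃
  rw [← intervalIntegral.integral_add_adjacent_intervals (i₁.trans i₂) i₃,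
    ← intervalIntegral.integral_add_adjacent_intervals i₁ i₂,
    intervalIntegral.integral_congr_uIoo h₁, intervalIntegral.integral_congr_uIoo h₂,
    intervalIntegral.integral_congr_uIoo h₃]

namespace HarmonicSeq

variable {P : ℕ → ℝ[X]}

theorem derivative_kernelChain_succ (hP : HarmonicSeq P) (c : ℝ) (m k : ℕ) :
    (kernelChain P c m (k + 1)).derivative = kernelChain P c m k := by
  simp only [kernelChain, weightedShift, derivative_add, derivative_mul, derivative_sub,
    derivative_X, derivative_C, hP.2]
  rw [show (m : ℝ) - ↑(k + 1) = m - k - 1 by push_cast; ring, C_sub, C_1]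
  ring

theorem derivative_kernelChain_zero (hP : HarmonicSeq P) (c : ℝ) (m : ℕ) :
    (kernelChain P c m 0).derivative = C ((m : ℝ) + 1) := by
  simp only [kernelChain, weightedShift, derivative_add, derivative_mul, derivative_sub,
    derivative_X, derivative_C, hP.2, hP.1, derivative_one, C_add, C_1, Nat.cast_zero,
    sub_zero]
  ring

theorem integral_eval_mul_sub_mul_iteratedDeriv (hP : HarmonicSeq P) {f : ℝ → ℝ} {s : Set ℝ}
    (hs : IsOpen s) {m : ℕ} (hf : ContDiffOn ℝ (m + 1 : ℕ) f s) {u v : ℝ} (huv : uIcc u v ⊆ s)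
    (c : ℝ) :
    ∫ t in u..v, (P m).eval t * (t - c) * iteratedDeriv (m + 1) f t =
      (-1) ^ m * (darbouxSum (kernelChain P c m) f m v - darbouxSum (kernelChain P c m) f m u
        - (m + 1) * ∫ t in u..v, f t) := by
  set g := fun t => (P m).eval t * (t - c) * iteratedDeriv (m + 1) f t
  have hderiv : ∀ t ∈ uIcc u v, HasDerivAt (darbouxSum (kernelChain P c m) f m)
      ((m + 1) * f t + (-1) ^ m * g t) t := by
    intro t ht
    have h := hasDerivAt_darbouxSum (hP.derivative_kernelChain_succ c m) m fun k hk =>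
      hf.hasDerivAt_iteratedDeriv_of_isOpen hs (by exact_mod_cast Nat.lt_succ_of_le hk) (huv ht)
    rw [hP.derivative_kernelChain_zero, kernelChain_self] at h
    convert h using 1
    simp only [g, eval_C, eval_mul, eval_sub, eval_X]
    ring
  have hf_int : IntervalIntegrable f volume u v := (hf.continuousOn.mono huv).intervalIntegrable
  have hg_int : IntervalIntegrable g volume u v := by
    have := (hf.continuousOn_iteratedDeriv_of_isOpen hs le_rfl).mono huv
    exact ContinuousOn.intervalIntegrable (by fun_prop)
  rw [← intervalIntegral.integral_eq_sub_of_hasDerivAt hderiv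
      ((hf_int.const_mul _).add (hg_int.const_mul _)),
    intervalIntegral.integral_add (hf_int.const_mul _) (hg_int.const_mul _),
    intervalIntegral.integral_const_mul, intervalIntegral.integral_const_mul]
  have hsq : (-1 : ℝ) ^ m * (-1) ^ m = 1 := by rw [← mul_pow]; norm_num
  linear_combination (-∫ t in u..v, g t) * hsq

theorem integral_eval_mul_Skernel_mul_iteratedDeriv (hP : HarmonicSeq P) {f : ℝ → ℝ}
    {s : Set ℝ} (hs : IsOpen s) {m : ℕ} (hf : ContDiffOn ℝ (m + 1 : ℕ) f s) {a b x : ℝ}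
    (hab : Icc a b ⊆ s) (hx : x ∈ Icc a ((a + b) / 2)) :
    ∫ t in a..b, (P m).eval t * Skernel a b x t * iteratedDeriv (m + 1) f t =
      (-1) ^ m * ((b - a) / 2 * (darbouxSum P f m x + darbouxSum P f m (a + b - x))
        + darbouxSum (weightedShift P m) f m b - darbouxSum (weightedShift P m) f m a
        - (m + 1) * ∫ t in a..b, f t) := by
  obtain ⟨hax, hxm⟩ := hx
  have hsub : ∀ {u v : ℝ}, a ≤ u → u ≤ v → v ≤ b → uIcc u v ⊆ s := fun hau huv hvb =>
    (uIcc_of_le huv ▸ Icc_subset_Icc hau hvb).trans hab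
  have hf_int : ∀ {u v : ℝ}, a ≤ u → u ≤ v → v ≤ b → IntervalIntegrable f volume u v :=
    fun hau huv hvb => (hf.continuousOn.mono (hsub hau huv hvb)).intervalIntegrable
  have h₁ := hsub le_rfl hax (by linarith)
  have h₂ := hsub hax (by linarith : x ≤ a + b - x) (by linarith)
  have h₃ := hsub (by linarith : a ≤ a + b - x) (by linarith) le_rfl
  have hf_split : (∫ t in a..x, f t) + (∫ t in x..a + b - x, f t) + ∫ t in a + b - x..b, f t =
      ∫ t in a..b, f t := by
    have i₁ : IntervalIntegrable f volume a x := hf_int le_rfl hax (by linarith)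
    have i₂ : IntervalIntegrable f volume x (a + b - x) := hf_int hax (by linarith) (by linarith)
    rw [intervalIntegral.integral_add_adjacent_intervals i₁ i₂,
      intervalIntegral.integral_add_adjacent_intervals (i₁.trans i₂)
        (hf_int (by linarith) (by linarith) le_rfl)]
  rw [integral_mul_Skernel_mul ⟨hax, hxm⟩ (P m).continuous.continuousOn
      ((hf.continuousOn_iteratedDeriv_of_isOpen hs le_rfl).mono hab),
    hP.integral_eval_mul_sub_mul_iteratedDeriv hs hf h₁,
    hP.integral_eval_mul_sub_mul_iteratedDeriv hs hf h₂,
    hP.integral_eval_mul_sub_mul_iteratedDeriv hs hf h₃, ← hf_split]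
  simp only [darbouxSum_kernelChain]
  ring

end HarmonicSeq

theorem darbouxSum_add_darbouxSum_of_eval_eq {P : ℕ → ℝ[X]} (hP0 : P 0 = 1) {y z : ℝ}
    (hyz : ∀ k, (P k).eval z = (-1) ^ k * (P k).eval y) (f : ℝ → ℝ) (m : ℕ) :
    (darbouxSum P f m y + darbouxSum P f m z) / 2 =
      (f y + f z) / 2 + ∑ k ∈ Icc 1 m,
        (-1 : ℝ) ^ k / 2 * (P k).eval y *
          (iteratedDeriv k f y + (-1) ^ k * iteratedDeriv k f z) := by
  have hterm : ∀ k, ((-1) ^ k * (P k).eval y * iteratedDeriv k f y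
      + (-1) ^ k * (P k).eval z * iteratedDeriv k f z) / 2 =
      (-1 : ℝ) ^ k / 2 * (P k).eval y * (iteratedDeriv k f y + (-1) ^ k * iteratedDeriv k f z) := by
    intro k; rw [hyz]; ring
  rw [darbouxSum, darbouxSum, ← sum_add_distrib, sum_div, sum_congr rfl fun k _ => hterm k,
    sum_range_succ', sum_Icc_one_eq_sum_range]
  simp [hP0]
  ring

theorem darbouxSum_sub_darbouxSum_div_eq_sum_Ftilde (P : ℕ → ℝ[X]) (f : ℝ → ℝ) (m : ℕ)
    (a b : ℝ) :
    (darbouxSum (weightedShift P m) f m b - darbouxSum (weightedShift P m) f m a) / (b - a) =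
      ∑ k ∈ Icc 1 m, Ftilde P f (m + 1) a b k := by
  have hlast : Ftilde P f (m + 1) a b (m + 1) = 0 := by simp [Ftilde]
  rw [sum_Icc_one_eq_sum_range, ← add_zero (∑ k ∈ range m, _), ← hlast, ← sum_range_succ]
  simp only [darbouxSum, weightedShift, ← sum_sub_distrib, sum_div]
  refine sum_congr rfl fun k _ => ?_
  simp only [Ftilde, eval_mul, eval_C, Nat.add_sub_cancel]
  push_cast
  ring

theorem stmt_13_general (n : ℕ) (hn : 1 ≤ n) (P : ℕ → Polynomial ℝ) (hP : HarmonicSeq P)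
    (a b c d : ℝ) (hab : a < b) (hca : c < a) (hbd : b < d)
    (hsym : ∀ k, ∀ t ∈ Set.Icc a b, (P k).eval t = (-1 : ℝ) ^ k * (P k).eval (a + b - t))
    (f : ℝ → ℝ)
    (hf : ContDiffOn ℝ (n : ℕ∞) f (Set.Ioo c d))
    (x : ℝ) (hx : x ∈ Set.Icc a ((a + b) / 2)) :
    (1 / (n : ℝ)) *
        ((f x + f (a + b - x)) / 2 +
          ∑ k ∈ Finset.Icc 1 (n - 1),
            (((-1 : ℝ) ^ k / 2) * (P k).eval x *
                (iteratedDeriv k f x + (-1 : ℝ) ^ k * iteratedDeriv k f (a + b - x))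
              + Ftilde P f n a b k))
      - (1 / (b - a)) * ∫ y in a..b, f y
    = ((-1 : ℝ) ^ (n - 1) / ((b - a) * n)) *
        ∫ t in a..b, (P (n - 1)).eval t * Skernel a b x t * iteratedDeriv n f t := by
  obtain ⟨m, rfl⟩ : ∃ m, n = m + 1 := ⟨n - 1, by omega⟩
  have hsym' : ∀ k, (P k).eval (a + b - x) = (-1) ^ k * (P k).eval x := fun k => by
    rw [hsym k _ ⟨by linarith [hx.2], by linarith [hx.1]⟩, sub_sub_cancel]
  have hsq : ((-1 : ℝ) ^ m) ^ 2 = 1 := by rw [← pow_mul, mul_comm, pow_mul]; norm_num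
  have hba : b - a ≠ 0 := sub_ne_zero.2 hab.ne'
  rw [Nat.add_sub_cancel, hP.integral_eval_mul_Skernel_mul_iteratedDeriv isOpen_Ioo hf
      (Icc_subset_Ioo hca hbd) hx, sum_add_distrib,
    ← darbouxSum_sub_darbouxSum_div_eq_sum_Ftilde, ← add_assoc,
    ← darbouxSum_add_darbouxSum_of_eval_eq hP.1 hsym']
  field_simp
  rw [hsq]
  push_cast
  ring

theorem stmt_13 (n : ℕ) (hn : 1 ≤ n) (P : ℕ → Polynomial ℝ) (hP : HarmonicSeq P)
    (a b c d : ℝ) (hab : a < b) (hca : c < a) (hbd : b < d)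
    (hsym : ∀ k, ∀ t ∈ Set.Icc a b, (P k).eval t = (-1 : ℝ) ^ k * (P k).eval (a + b - t))
    (f : ℝ → ℝ)
    (hf : ContDiffOn ℝ (n : ℕ∞) f (Set.Ioo c d))
    (hAC : AbsCont (iteratedDeriv n f) a b)
    (x : ℝ) (hx : x ∈ Set.Icc a ((a + b) / 2)) :
    (1 / (n : ℝ)) *
        ((f x + f (a + b - x)) / 2 +
          ∑ k ∈ Finset.Icc 1 (n - 1),
            (((-1 : ℝ) ^ k / 2) * (P k).eval x *
                (iteratedDeriv k f x + (-1 : ℝ) ^ k * iteratedDeriv k f (a + b - x))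
              + Ftilde P f n a b k))
      - (1 / (b - a)) * ∫ y in a..b, f y
    = ((-1 : ℝ) ^ (n - 1) / ((b - a) * n)) *
        ∫ t in a..b, (P (n - 1)).eval t * Skernel a b x t * iteratedDeriv n f t :=
  stmt_13_general n hn P hP a b c d hab hca hbd hsym f hf x hx
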